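/- arXiv:2405.07110 — 5 statements merged into one kernel-verified Lean document; each statement's English description precedes it below -/
import Mathlib

section
/- For every n ≥ 1, the number of tree representations on {1,…,n} equals ∏_{k=2}^{n} (2k−3) (the double factorial (2n−3)!!, with the empty product equal to 1). In particular there are 15 tree representations on {1,2,3,4}. -/
/-- 0-indexed position of the first occurrence of `x` in `v`. -/
def firstOcc (v : List ℕ) (x : ℕ) : ℕ := v.idxOf x

/-- 0-indexed position of the second (= last, when `x` occurs exactly twice)
occurrence of `x` in `v`. -/
def secondOcc (v : List ℕ) (x : ℕ) : ℕ := v.length - 1 - v.reverse.idxOf x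

/-- `v` is a tree representation on `{1,…,n}`: it has length `2n`, entries in
`{1,…,n}`, every `i ∈ {1,…,n}` occurs exactly twice, the first entry is `1`,
for every `i ∈ {2,…,n}` the first occurrence of `i` appears strictly before the
second occurrence of `i-1`, and the second occurrence of `i` appears strictly
after the second occurrence of `i-1`. -/
def IsTreeRep (n : ℕ) (v : List ℕ) : Prop :=
  v.length = 2 * n ∧
  (∀ x ∈ v, 1 ≤ x ∧ x ≤ n) ∧
  (∀ i, 1 ≤ i → i ≤ n → v.count i = 2) ∧
  v.getD 0 0 = 1 ∧
  (∀ i, 2 ≤ i → i ≤ n → firstOcc v i < secondOcc v (i - 1)) ∧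
  (∀ i, 2 ≤ i → i ≤ n → secondOcc v (i - 1) < secondOcc v i)

/-!
In a tree representation on `{1, …, n+1}` the second occurrences of `1, …, n+1` appear in
increasing order, so the last entry is `n + 1`. Deleting both copies of `n + 1` leaves a
tree representation on `{1, …, n}`; conversely, `n + 1` may be inserted at any index
`1 ≤ p ≤ 2n - 1` (after the leading `1`, before the second `n`, which is the last entry) as long
as a second copy is appended. Insertion moves every other position `k` to `succAbove p k`, a
strictly monotone map, so the order conditions among `1, …, n` are untouched. Hence the tree
representations on `{1, …, n+1}` are in bijection with pairs (tree representation on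
`{1, …, n}`, `p ∈ [1, 2n - 1]`), and the count gets multiplied by `2n - 1` at each step.
-/

def succAbove (p k : ℕ) : ℕ := if k < p then k else k + 1

lemma succAbove_strictMono (p : ℕ) : StrictMono (succAbove p) := by
  intro a b h
  unfold succAbove
  split_ifs <;> omega

section Occurrences

variable {l r A B : List ℕ} {x m : ℕ}

lemma firstOcc_append_of_mem (hx : x ∈ l) : firstOcc (l ++ r) x = firstOcc l x :=
  List.idxOf_append_of_mem hx

lemma firstOcc_insert_self (hm : m ∉ A) : firstOcc (A ++ m :: B) m = A.length := by
  simp [firstOcc, List.idxOf_append, hm]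

lemma firstOcc_insert_of_ne (hx : x ≠ m) :
    firstOcc (A ++ m :: B) x = succAbove A.length (firstOcc (A ++ B) x) := by
  have hB : (m :: B).idxOf x = B.idxOf x + 1 := List.idxOf_cons_ne _ (Ne.symm hx)
  by_cases hA : x ∈ A
  · simp [firstOcc, List.idxOf_append, hA, succAbove, List.idxOf_lt_length_of_mem hA]
  · simp only [firstOcc, List.idxOf_append, hA, hB, succAbove, if_false]
    split_ifs <;> omega

lemma secondOcc_lt_length (hl : l ≠ []) : secondOcc l x < l.length := by
  have := List.length_pos_iff.2 hl
  unfold secondOcc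
  omega

lemma secondOcc_concat_self : secondOcc (l ++ [m]) m = l.length := by
  simp [secondOcc]

lemma secondOcc_append_of_notMem (hx : x ∈ l) (hr : x ∉ r) :
    secondOcc (l ++ r) x = secondOcc l x := by
  have := List.idxOf_lt_length_of_mem (List.mem_reverse.2 hx)
  simp only [secondOcc, List.reverse_append, List.idxOf_append, List.mem_reverse, hr,
    if_false, List.length_append, List.length_reverse] at *
  omega

lemma secondOcc_insert_of_ne (hx : x ≠ m) (hmem : x ∈ A ++ B) :
    secondOcc (A ++ m :: B) x = succAbove A.length (secondOcc (A ++ B) x) := by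
  have hrev : (A ++ m :: B).reverse = B.reverse ++ m :: A.reverse := by simp
  have hfirst := firstOcc_insert_of_ne (A := B.reverse) (B := A.reverse) hx
  have hlt := List.idxOf_lt_length_of_mem (List.mem_reverse.2 hmem)
  simp only [firstOcc, List.length_reverse, ← List.reverse_append] at hfirst
  simp only [secondOcc, hrev, hfirst, List.length_append, List.length_cons,
    List.length_reverse, succAbove] at *
  split_ifs <;> omega

end Occurrences

def insertAndAppend (m p : ℕ) (v : List ℕ) : List ℕ := v.take p ++ m :: v.drop p ++ [m]

section InsertAndAppend

variable {v : List ℕ} {m p x : ℕ}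

lemma length_insertAndAppend : (insertAndAppend m p v).length = v.length + 2 := by
  simp [insertAndAppend]
  omega

lemma mem_take_append_cons_drop : x ∈ v.take p ++ m :: v.drop p ↔ x = m ∨ x ∈ v := by
  have hv : x ∈ v ↔ x ∈ v.take p ∨ x ∈ v.drop p := by
    rw [← List.mem_append, List.take_append_drop]
  simp only [List.mem_append, List.mem_cons, hv]
  tauto

lemma mem_insertAndAppend : x ∈ insertAndAppend m p v ↔ x = m ∨ x ∈ v := by
  rw [insertAndAppend, List.mem_append, mem_take_append_cons_drop, List.mem_singleton]
  tauto

lemma count_insertAndAppend :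
    (insertAndAppend m p v).count x = v.count x + if x = m then 2 else 0 := by
  conv_rhs => rw [← List.take_append_drop p v]
  simp only [insertAndAppend, List.count_append, List.count_cons]
  split_ifs <;> simp_all; omega

lemma getD_zero_insertAndAppend (hp : p ≤ v.length) :
    (insertAndAppend m p v).getD 0 0 = if p = 0 then m else v.getD 0 0 := by
  rcases v with _ | ⟨a, t⟩ <;> rcases p with _ | p <;> simp_all [insertAndAppend]

lemma filter_insertAndAppend (hm : m ∉ v) :
    (insertAndAppend m p v).filter (· ≠ m) = v := by
  have hv : v.filter (· ≠ m) = v := List.filter_eq_self.2 fun x hx => by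
    simpa using ne_of_mem_of_not_mem hx hm
  conv_rhs => rw [← hv, ← List.take_append_drop p v, List.filter_append]
  simp [insertAndAppend, List.filter_append]

variable (hm : m ∉ v) (hp : p ≤ v.length)
include hm hp

lemma firstOcc_insertAndAppend_self : firstOcc (insertAndAppend m p v) m = p := by
  have hmA : m ∉ v.take p := fun h => hm (List.mem_of_mem_take h)
  rw [insertAndAppend, firstOcc_append_of_mem List.mem_append_cons_self,
    firstOcc_insert_self hmA, List.length_take_of_le hp]

omit hm in
lemma secondOcc_insertAndAppend_self : secondOcc (insertAndAppend m p v) m = v.length + 1 := by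
  rw [insertAndAppend, secondOcc_concat_self]
  simp only [List.length_append, List.length_cons, List.length_take, List.length_drop]
  omega

lemma firstOcc_insertAndAppend (hx : x ∈ v) :
    firstOcc (insertAndAppend m p v) x = succAbove p (firstOcc v x) := by
  rw [insertAndAppend, firstOcc_append_of_mem (mem_take_append_cons_drop.2 (.inr hx)),
    firstOcc_insert_of_ne (ne_of_mem_of_not_mem hx hm), List.take_append_drop,
    List.length_take_of_le hp]

lemma secondOcc_insertAndAppend (hx : x ∈ v) :
    secondOcc (insertAndAppend m p v) x = succAbove p (secondOcc v x) := by
  have hxm := ne_of_mem_of_not_mem hx hm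
  rw [insertAndAppend,
    secondOcc_append_of_notMem (mem_take_append_cons_drop.2 (.inr hx)) (by simpa using hxm),
    secondOcc_insert_of_ne hxm (by rwa [List.take_append_drop]), List.take_append_drop,
    List.length_take_of_le hp]

lemma firstOcc_lt_secondOcc_insertAndAppend_iff {y : ℕ} (hx : x ∈ v) (hy : y ∈ v) :
    firstOcc (insertAndAppend m p v) x < secondOcc (insertAndAppend m p v) y ↔
      firstOcc v x < secondOcc v y := by
  rw [firstOcc_insertAndAppend hm hp hx, secondOcc_insertAndAppend hm hp hy]
  exact (succAbove_strictMono p).lt_iff_lt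

lemma secondOcc_lt_secondOcc_insertAndAppend_iff {y : ℕ} (hx : x ∈ v) (hy : y ∈ v) :
    secondOcc (insertAndAppend m p v) x < secondOcc (insertAndAppend m p v) y ↔
      secondOcc v x < secondOcc v y := by
  rw [secondOcc_insertAndAppend hm hp hx, secondOcc_insertAndAppend hm hp hy]
  exact (succAbove_strictMono p).lt_iff_lt

end InsertAndAppend

lemma exists_insertAndAppend_eq {w : List ℕ} {m : ℕ} (hc : w.count m = 2)
    (hl : w.getLast? = some m) : ∃ v p, m ∉ v ∧ p ≤ v.length ∧ insertAndAppend m p v = w := by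
  obtain ⟨u, rfl⟩ := List.getLast?_eq_some_iff.1 hl
  have hmu : m ∈ u := List.count_pos_iff.1 (by simp at hc; omega)
  obtain ⟨A, B, rfl, hA⟩ := List.eq_append_cons_of_mem hmu
  have hB : m ∉ B := List.count_eq_zero.1 (by simp [List.count_eq_zero.2 hA] at hc; omega)
  refine ⟨A ++ B, A.length, by simp [hA, hB], by simp, ?_⟩
  simp [insertAndAppend]

lemma insertAndAppend_inj {v v' : List ℕ} {m p p' : ℕ} (hm : m ∉ v) (hm' : m ∉ v')
    (hp : p ≤ v.length) (hp' : p' ≤ v'.length)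
    (h : insertAndAppend m p v = insertAndAppend m p' v') : v = v' ∧ p = p' :=
  ⟨by rw [← filter_insertAndAppend hm (p := p), h, filter_insertAndAppend hm'],
    by rw [← firstOcc_insertAndAppend_self hm hp, h, firstOcc_insertAndAppend_self hm' hp']⟩

lemma forall_le_succ_iff {P : ℕ → Prop} {a n : ℕ} (h : a ≤ n + 1) :
    (∀ i, a ≤ i → i ≤ n + 1 → P i) ↔ (∀ i, a ≤ i → i ≤ n → P i) ∧ P (n + 1) := by
  refine ⟨fun hP => ⟨fun i h1 h2 => hP i h1 (by omega), hP _ h le_rfl⟩, ?_⟩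
  rintro ⟨hP, htop⟩ i h1 h2
  obtain h2 | rfl := Nat.le_succ_iff.1 h2
  exacts [hP i h1 h2, htop]

section TreeRep

variable {n p : ℕ} {v : List ℕ}

lemma getLast?_eq_of_isTreeRep (hn : 1 ≤ n) (hv : IsTreeRep n v) : v.getLast? = some n := by
  obtain ⟨hlen, hrange, -, -, -, hss⟩ := hv
  obtain rfl | ⟨u, x, rfl⟩ := List.eq_nil_or_concat v
  · simp at hlen; omega
  rw [List.concat_eq_append] at *
  have hx := hrange x (by simp)
  suffices x = n by simp [this]
  by_contra hxn
  have h := hss (x + 1) (by omega) (by omega)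
  have hlt := secondOcc_lt_length (l := u ++ [x]) (x := x + 1) (by simp)
  simp only [Nat.add_sub_cancel, secondOcc_concat_self, List.length_append,
    List.length_singleton] at h hlt
  omega

lemma secondOcc_eq_of_isTreeRep (hn : 1 ≤ n) (hv : IsTreeRep n v) :
    secondOcc v n = 2 * n - 1 := by
  obtain ⟨u, rfl⟩ := List.getLast?_eq_some_iff.1 (getLast?_eq_of_isTreeRep hn hv)
  have hlen := hv.1
  simp only [List.length_append, List.length_singleton] at hlen
  rw [secondOcc_concat_self]
  omega

lemma mem_of_isTreeRep (hv : IsTreeRep n v) {i : ℕ} (h1 : 1 ≤ i) (h2 : i ≤ n) : i ∈ v :=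
  List.count_pos_iff.1 (by rw [hv.2.2.1 i h1 h2]; omega)

lemma succ_notMem_of_isTreeRep (hv : IsTreeRep n v) : n + 1 ∉ v := fun h => by
  have := hv.2.1 _ h
  omega

lemma le_length_of_isTreeRep (hv : IsTreeRep n v) (hp : p ≤ 2 * n - 1) :
    p ≤ v.length := by
  rw [hv.1]
  omega

lemma isTreeRep_insertAndAppend_iff' (hn : 1 ≤ n) (hm : n + 1 ∉ v) (hp : p ≤ v.length) :
    IsTreeRep (n + 1) (insertAndAppend (n + 1) p v) ↔ IsTreeRep n v ∧ 1 ≤ p ∧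
      firstOcc (insertAndAppend (n + 1) p v) (n + 1) <
        secondOcc (insertAndAppend (n + 1) p v) n ∧
      secondOcc (insertAndAppend (n + 1) p v) n <
        secondOcc (insertAndAppend (n + 1) p v) (n + 1) := by
  have hrange : (∀ x ∈ insertAndAppend (n + 1) p v, 1 ≤ x ∧ x ≤ n + 1) ↔
      ∀ x ∈ v, 1 ≤ x ∧ x ≤ n := by
    simp only [mem_insertAndAppend, forall_eq_or_imp, Nat.le_add_left, le_refl, and_self,
      true_and]
    refine forall₂_congr fun x hx => ?_
    have := ne_of_mem_of_not_mem hx hm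
    omega
  have hcount (i) (hi : i ≤ n) : (insertAndAppend (n + 1) p v).count i = v.count i := by
    simp only [count_insertAndAppend]
    split_ifs <;> omega
  have hhead : (insertAndAppend (n + 1) p v).getD 0 0 = 1 ↔ 1 ≤ p ∧ v.getD 0 0 = 1 := by
    rw [getD_zero_insertAndAppend hp]
    split_ifs <;> omega
  have hmem (hc : ∀ i, 1 ≤ i → i ≤ n → v.count i = 2) (i) (h1 : 1 ≤ i) (h2 : i ≤ n) : i ∈ v :=
    List.count_pos_iff.1 (by rw [hc i h1 h2]; omega)
  unfold IsTreeRep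
  rw [length_insertAndAppend, hrange, forall_le_succ_iff (by omega), hhead,
    forall_le_succ_iff (by omega), forall_le_succ_iff (by omega), Nat.add_sub_cancel]
  constructor
  · rintro ⟨hlen, hr, ⟨hc, -⟩, ⟨hp1, hh⟩, ⟨hf, htf⟩, ⟨hs, hts⟩⟩
    have hc' (i) (h1 : 1 ≤ i) (h2 : i ≤ n) : v.count i = 2 := by
      rw [← hcount i h2, hc i h1 (by omega)]
    refine ⟨⟨by omega, hr, hc', hh, fun i h1 h2 => ?_, fun i h1 h2 => ?_⟩, hp1, htf, hts⟩
    · exact (firstOcc_lt_secondOcc_insertAndAppend_iff hm hp (hmem hc' i (by omega) h2)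
        (hmem hc' (i - 1) (by omega) (by omega))).1 (hf i h1 h2)
    · exact (secondOcc_lt_secondOcc_insertAndAppend_iff hm hp
        (hmem hc' (i - 1) (by omega) (by omega)) (hmem hc' i (by omega) h2)).1 (hs i h1 h2)
  · rintro ⟨⟨hlen, hr, hc, hh, hf, hs⟩, hp1, htf, hts⟩
    refine ⟨by omega, hr, ⟨fun i h1 h2 => ?_, ?_⟩, ⟨hp1, hh⟩, ⟨fun i h1 h2 => ?_, htf⟩,
      ⟨fun i h1 h2 => ?_, hts⟩⟩
    · rw [hcount i h2, hc i h1 h2]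
    · simp [count_insertAndAppend, List.count_eq_zero.2 hm]
    · exact (firstOcc_lt_secondOcc_insertAndAppend_iff hm hp (hmem hc i (by omega) h2)
        (hmem hc (i - 1) (by omega) (by omega))).2 (hf i h1 h2)
    · exact (secondOcc_lt_secondOcc_insertAndAppend_iff hm hp
        (hmem hc (i - 1) (by omega) (by omega)) (hmem hc i (by omega) h2)).2 (hs i h1 h2)

lemma insertAndAppend_top_iff (hn : 1 ≤ n) (hv : IsTreeRep n v) (hp : p ≤ v.length) :
    firstOcc (insertAndAppend (n + 1) p v) (n + 1) <
        secondOcc (insertAndAppend (n + 1) p v) n ∧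
      secondOcc (insertAndAppend (n + 1) p v) n <
        secondOcc (insertAndAppend (n + 1) p v) (n + 1) ↔ p ≤ 2 * n - 1 := by
  have hm := succ_notMem_of_isTreeRep hv
  rw [firstOcc_insertAndAppend_self hm hp, secondOcc_insertAndAppend_self hp,
    secondOcc_insertAndAppend hm hp (mem_of_isTreeRep hv hn le_rfl),
    secondOcc_eq_of_isTreeRep hn hv, hv.1, succAbove]
  split_ifs <;> omega

lemma isTreeRep_insertAndAppend_iff (hn : 1 ≤ n) (hm : n + 1 ∉ v) (hp : p ≤ v.length) :
    IsTreeRep (n + 1) (insertAndAppend (n + 1) p v) ↔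
      IsTreeRep n v ∧ p ∈ Set.Icc 1 (2 * n - 1) := by
  rw [isTreeRep_insertAndAppend_iff' hn hm hp, Set.mem_Icc]
  exact and_congr_right fun hv => and_congr_right' (insertAndAppend_top_iff hn hv hp)

lemma setOf_isTreeRep_succ (hn : 1 ≤ n) :
    {w | IsTreeRep (n + 1) w} = (fun q : List ℕ × ℕ => insertAndAppend (n + 1) q.2 q.1) ''
      ({v | IsTreeRep n v} ×ˢ Set.Icc 1 (2 * n - 1)) := by
  ext w
  constructor
  · intro hw
    obtain ⟨v, p, hm, hp, rfl⟩ := exists_insertAndAppend_eq (hw.2.2.1 (n + 1) (by omega) le_rfl)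
      (getLast?_eq_of_isTreeRep (by omega) hw)
    exact ⟨(v, p), (isTreeRep_insertAndAppend_iff hn hm hp).1 hw, rfl⟩
  · rintro ⟨⟨v, p⟩, ⟨hv, hp⟩, rfl⟩
    exact (isTreeRep_insertAndAppend_iff hn (succ_notMem_of_isTreeRep hv)
      (le_length_of_isTreeRep hv hp.2)).2 ⟨hv, hp⟩

lemma ncard_isTreeRep_succ (hn : 1 ≤ n) :
    {w | IsTreeRep (n + 1) w}.ncard = {v | IsTreeRep n v}.ncard * (2 * n - 1) := by
  rw [setOf_isTreeRep_succ hn, Set.InjOn.ncard_image, Set.ncard_prod, Set.ncard_Icc_nat,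
    Nat.add_sub_cancel]
  rintro ⟨v, p⟩ ⟨hv, hp⟩ ⟨v', p'⟩ ⟨hv', hp'⟩ h
  obtain ⟨rfl, rfl⟩ := insertAndAppend_inj (succ_notMem_of_isTreeRep hv)
    (succ_notMem_of_isTreeRep hv') (le_length_of_isTreeRep hv hp.2)
    (le_length_of_isTreeRep hv' hp'.2) h
  rfl

lemma setOf_isTreeRep_one : {v | IsTreeRep 1 v} = {[1, 1]} := by
  ext v
  simp only [Set.mem_ofPred_eq, Set.mem_singleton_iff]
  constructor
  · rintro ⟨hlen, hrange, -⟩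
    obtain ⟨a, b, rfl⟩ := List.length_eq_two.1 hlen
    have ha := hrange a (by simp)
    have hb := hrange b (by simp)
    rw [show a = 1 by omega, show b = 1 by omega]
  · rintro rfl
    refine ⟨rfl, by simp, fun i h1 h2 => ?_, rfl, fun i h1 h2 => by omega,
      fun i h1 h2 => by omega⟩
    obtain rfl : i = 1 := by omega
    rfl

lemma ncard_isTreeRep (hn : 1 ≤ n) :
    {v | IsTreeRep n v}.ncard = ∏ k ∈ Finset.Icc 2 n, (2 * k - 3) := by
  induction n, hn using Nat.le_induction with
  | base => rw [setOf_isTreeRep_one, Set.ncard_singleton, Finset.Icc_eq_empty (by omega),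
      Finset.prod_empty]
  | succ n hn ih =>
    rw [ncard_isTreeRep_succ hn, ih, Finset.prod_Icc_succ_top (by omega),
      show 2 * (n + 1) - 3 = 2 * n - 1 by omega]

end TreeRep

/-- For every `n ≥ 1`, the number of tree representations on `{1,…,n}` equals
`∏_{k=2}^{n} (2k−3)` (the double factorial `(2n−3)!!`, the empty product being `1`);
in particular there are `15` tree representations on `{1,2,3,4}`. -/
theorem stmt0 (n : ℕ) (hn : 1 ≤ n) :
    {v : List ℕ | IsTreeRep n v}.ncard = ∏ k ∈ Finset.Icc 2 n, (2 * k - 3) ∧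
    {v : List ℕ | IsTreeRep 4 v}.ncard = 15 :=
  ⟨ncard_isTreeRep hn, by rw [ncard_isTreeRep (by norm_num)]; decide⟩
end

section
/- Let n ≥ 2 and let v be a tree representation on {1,…,n}. Then the sequence of length 2n−2 obtained from v by deleting both occurrences of n is a tree representation on {1,…,n−1}. -/
/-!
Deleting the entries equal to `n` preserves the relative order of the remaining ones: the entry at
position `i` of `v` moves to position `v.countPBefore p i`, the number of kept entries before it.
This map is strictly increasing on the positions of kept entries and sends the first and last
occurrences of a kept value to its first and last occurrences in the filtered list, so the order
conditions for `i ≤ n - 1` survive; the remaining conditions are counting.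
-/

namespace List

variable {α : Type*} {p : α → Bool}

theorem countPBefore_add_one_of_pos {xs : List α} {i : ℕ} (hi : i < xs.length) (hip : p xs[i]) :
    xs.countPBefore p (i + 1) = xs.countPBefore p i + 1 := by
  induction xs generalizing i <;> grind [cases Nat]

theorem countPBefore_lt_countPBefore {xs : List α} {i j : ℕ} (hi : i < xs.length)
    (hip : p xs[i]) (hij : i < j) : xs.countPBefore p i < xs.countPBefore p j :=
  calc xs.countPBefore p i < xs.countPBefore p (i + 1) := by
        rw [countPBefore_add_one_of_pos hi hip]; exact Nat.lt_add_one _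
    _ ≤ xs.countPBefore p j := countPBefore_mono hij

theorem countPBefore_reverse_add (xs : List α) (i : ℕ) :
    xs.reverse.countPBefore p i + xs.countPBefore p (xs.length - i) = xs.countP p := by
  rw [countPBefore_eq_countP_take, countPBefore_eq_countP_take, take_reverse, countP_reverse,
    add_comm, ← countP_append, take_append_drop]

theorem idxOf_filter [BEq α] [LawfulBEq α] {x : α} (hx : p x) (xs : List α) :
    (xs.filter p).idxOf x = xs.countPBefore p (xs.idxOf x) := by
  induction xs with
  | nil => rfl
  | cons a xs ih =>
    by_cases h : a = x
    · subst h; simp [hx]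
    · by_cases ha : p a <;> simp [ha, idxOf_cons_ne _ h, ih]

theorem length_filter_ne_add_count [DecidableEq α] (a : α) (xs : List α) :
    (xs.filter (· ≠ a)).length + xs.count a = xs.length := by
  rw [← countP_eq_length_filter, count_eq_countP, add_comm, length_eq_countP_add_countP (· == a)]
  simp

end List

open List

section Occurrences

variable {p : ℕ → Bool} {v : List ℕ} {x : ℕ}

theorem secondOcc_lt_length_s1 (hx : x ∈ v) : secondOcc v x < v.length := by
  have := length_pos_of_mem hx
  unfold secondOcc
  omega

theorem getElem_secondOcc (hx : x ∈ v) : v[secondOcc v x]'(secondOcc_lt_length_s1 hx) = x := by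
  have hk : v.reverse.idxOf x < v.reverse.length := idxOf_lt_length_iff.mpr (mem_reverse.mpr hx)
  have := getElem_idxOf hk
  rw [getElem_reverse] at this
  simpa [secondOcc] using this

theorem firstOcc_filter (hpx : p x) :
    firstOcc (v.filter p) x = v.countPBefore p (firstOcc v x) :=
  idxOf_filter hpx v

theorem secondOcc_filter (hpx : p x) (hx : x ∈ v) :
    secondOcc (v.filter p) x = v.countPBefore p (secondOcc v x) := by
  have hk : v.reverse.idxOf x < v.length := by
    simpa using idxOf_lt_length_iff.mpr (mem_reverse.mpr hx)
  have hq : secondOcc v x + 1 = v.length - v.reverse.idxOf x := by unfold secondOcc; omega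
  have hsucc := countPBefore_add_one_of_pos (secondOcc_lt_length_s1 hx)
    (by rwa [getElem_secondOcc hx] : p v[secondOcc v x])
  rw [hq] at hsucc
  have hsplit := countPBefore_reverse_add (p := p) v (v.reverse.idxOf x)
  rw [secondOcc, ← filter_reverse, idxOf_filter hpx, ← countP_eq_length_filter]
  omega

theorem firstOcc_filter_lt_secondOcc_filter {y : ℕ} (hpx : p x) (hpy : p y) (hx : x ∈ v)
    (hy : y ∈ v) (h : firstOcc v x < secondOcc v y) :
    firstOcc (v.filter p) x < secondOcc (v.filter p) y := by
  have hlt : firstOcc v x < v.length := idxOf_lt_length_iff.mpr hx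
  rw [firstOcc_filter hpx, secondOcc_filter hpy hy]
  exact countPBefore_lt_countPBefore hlt (by simpa only [firstOcc, getElem_idxOf]) h

theorem secondOcc_filter_lt_secondOcc_filter {y : ℕ} (hpx : p x) (hpy : p y) (hx : x ∈ v)
    (hy : y ∈ v) (h : secondOcc v x < secondOcc v y) :
    secondOcc (v.filter p) x < secondOcc (v.filter p) y := by
  rw [secondOcc_filter hpx hx, secondOcc_filter hpy hy]
  exact countPBefore_lt_countPBefore (secondOcc_lt_length_s1 hx) (by rwa [getElem_secondOcc hx]) h

end Occurrences

/-- For `n ≥ 2`, deleting both occurrences of `n` from a tree representation on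
`{1,…,n}` yields a sequence of length `2n−2` that is a tree representation on
`{1,…,n−1}`. -/
theorem stmt1 (n : ℕ) (hn : 2 ≤ n) (v : List ℕ) (hv : IsTreeRep n v) :
    (v.filter fun x => x ≠ n).length = 2 * n - 2 ∧
    IsTreeRep (n - 1) (v.filter fun x => x ≠ n) := by
  obtain ⟨hlen, hrange, hcount, hhead, hfirst, hsecond⟩ := hv
  have hlen' : (v.filter fun x => x ≠ n).length = 2 * n - 2 := by
    have := length_filter_ne_add_count n v
    have := hcount n (by omega) le_rfl
    omega
  set keep : ℕ → Bool := fun x => x ≠ n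
  have hkeep : ∀ i ≤ n - 1, keep i := fun i hi ↦ decide_eq_true (by omega)
  have hmem : ∀ i, 1 ≤ i → i ≤ n → i ∈ v := fun i h1 h2 ↦ by
    rw [← count_pos_iff, hcount i h1 h2]
    omega
  refine ⟨hlen', by omega, fun x hx ↦ ?_, fun i h1 h2 ↦ ?_, ?_, fun i h2 hi ↦ ?_, fun i h2 hi ↦ ?_⟩
  · simp only [keep, mem_filter, decide_eq_true_eq] at hx
    have := hrange x hx.1
    omega
  · rw [count_filter (hkeep i h2)]
    exact hcount i h1 (by omega)
  · obtain ⟨a, t, rfl⟩ := exists_cons_of_length_pos (by omega : 0 < v.length)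
    obtain rfl : a = 1 := hhead
    rw [filter_cons_of_pos (hkeep 1 (by omega))]
    rfl
  · exact firstOcc_filter_lt_secondOcc_filter (hkeep i hi) (hkeep (i - 1) (by omega))
      (hmem i (by omega) (by omega)) (hmem (i - 1) (by omega) (by omega)) (hfirst i h2 (by omega))
  · exact secondOcc_filter_lt_secondOcc_filter (hkeep (i - 1) (by omega)) (hkeep i hi)
      (hmem (i - 1) (by omega) (by omega)) (hmem i (by omega) (by omega)) (hsecond i h2 (by omega))
end

section
/- Let n ≥ 2. Every tree representation on {1,…,n} can be transformed by a finite sequence of HOPs into the caterpillar representation (1, 2, 1̄, 3, 2̄, 4, 3̄, …, n, (n−1)̄, n̄), i.e. the sequence (1,2,1,3,2,4,3,…,n,n−1,n). Consequently, for any two tree representations u and v on {1,…,n}, there is a finite sequence of HOPs transforming u into v; that is, the graph whose vertices are the tree representations on {1,…,n} and whose edges join pairs differing by a single HOP is connected. -/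
/-- A single HOP: for some `i ∈ {2,…,n}`, remove the first occurrence of `i`
from `v` and reinsert it at a (0-indexed) position `k` strictly after the first
entry (`1 ≤ k`) and weakly before the (resulting position of the) second
occurrence of `i-1`. -/
def IsHop (n : ℕ) (v v' : List ℕ) : Prop :=
  ∃ i k, 2 ≤ i ∧ i ≤ n ∧ 1 ≤ k ∧ k ≤ secondOcc (v.erase i) (i - 1) ∧
    v' = (v.erase i).insertIdx k i

/-- `u` can be transformed into `v` by a sequence of exactly `m` HOPs. -/
def HopChain (n m : ℕ) (u v : List ℕ) : Prop :=
  ∃ f : ℕ → List ℕ, f 0 = u ∧ f m = v ∧ ∀ j < m, IsHop n (f j) (f (j + 1))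

/-- The caterpillar representation `(1, 2, 1̄, 3, 2̄, 4, 3̄, …, n, (n−1)̄, n̄)`. -/
def caterpillar (n : ℕ) : List ℕ :=
  1 :: (((List.range' 2 (n - 1)).flatMap fun k => [k, k - 1]) ++ [n])

/-!
Induction on `n`. Deleting both copies of `n + 1` from a tree representation `v` on
`{1,…,n+1}` leaves a tree representation `u` on `{1,…,n}`: the second copy of `n + 1` is the last
entry of `v`, and the first one sits at a position `p` with `1 ≤ p ≤ secondOcc u n`. Any two such
positions are joined by a single HOP of `n + 1`, so `v` is one HOP away from the representation
obtained from `u` by inserting `n + 1` just before its final `n`. This insertion maps HOPs on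
`{1,…,n}` to HOPs on `{1,…,n+1}` and the caterpillar to the caterpillar, so the HOP chains between
`u` and the caterpillar, in both directions, lift to chains between `v` and the caterpillar.
-/

open List Relation

/-- Where the entry at position `i` of a list moves when an entry is inserted at position `p`. -/
def shiftFrom (p i : ℕ) : ℕ := if p ≤ i then i + 1 else i

theorem strictMono_shiftFrom (p : ℕ) : StrictMono (shiftFrom p) := by
  intro a b h
  unfold shiftFrom
  split_ifs <;> omega

theorem lt_shiftFrom_iff {p i : ℕ} : p < shiftFrom p i ↔ p ≤ i := by
  unfold shiftFrom
  split_ifs <;> omega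

theorem shiftFrom_le (p i : ℕ) : shiftFrom p i ≤ i + 1 := by
  unfold shiftFrom
  split_ifs <;> omega

namespace List

variable {α : Type*} {a b : α} {l l₁ l₂ : List α} {p : ℕ}

theorem insertIdx_append_of_le_length (hp : p ≤ l₁.length) :
    (l₁ ++ l₂).insertIdx p a = l₁.insertIdx p a ++ l₂ := by
  induction l₁ generalizing p with
  | nil => simp_all
  | cons c l₁ ih =>
    cases p with
    | zero => rfl
    | succ p => simp [ih (by simpa using hp)]

theorem reverse_insertIdx (hp : p ≤ l.length) :
    (l.insertIdx p a).reverse = l.reverse.insertIdx (l.length - p) a := by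
  induction l generalizing p with
  | nil => simp_all
  | cons c l ih =>
    cases p with
    | zero =>
      rw [insertIdx_zero, reverse_cons, Nat.sub_zero, ← length_reverse, insertIdx_length_self]
    | succ p =>
      have hp : p ≤ l.length := by simpa using hp
      rw [insertIdx_succ_cons, reverse_cons, ih hp, reverse_cons,
        insertIdx_append_of_le_length (by simp), length_cons, Nat.add_sub_add_right]

section DecidableEq

variable [DecidableEq α]

theorem idxOf_insertIdx_of_ne (h : b ≠ a) :
    (l.insertIdx p a).idxOf b = shiftFrom p (l.idxOf b) := by
  induction l generalizing p with
  | nil => cases p <;> simp [shiftFrom, idxOf_cons_ne _ h.symm]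
  | cons c l ih =>
    cases p with
    | zero => simp [shiftFrom, idxOf_cons_ne _ h.symm]
    | succ p =>
      rcases eq_or_ne c b with rfl | hc
      · simp [shiftFrom]
      · simp only [insertIdx_succ_cons, idxOf_cons_ne _ hc, ih, shiftFrom]
        split_ifs <;> omega

theorem idxOf_insertIdx_self (ha : a ∉ l) (hp : p ≤ l.length) :
    (l.insertIdx p a).idxOf a = p := by
  induction l generalizing p with
  | nil => simp_all
  | cons c l ih =>
    cases p with
    | zero => simp
    | succ p =>
      rw [mem_cons, not_or] at ha
      simp [idxOf_cons_ne _ (Ne.symm ha.1), ih ha.2 (by simpa using hp)]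

theorem erase_insertIdx_of_not_mem (ha : a ∉ l) (hp : p ≤ l.length) :
    (l.insertIdx p a).erase a = l := by
  rw [erase_eq_eraseIdx_of_idxOf (idxOf_insertIdx_self ha hp), eraseIdx_insertIdx_self]

theorem insertIdx_idxOf_erase (ha : a ∈ l) : (l.erase a).insertIdx (l.idxOf a) a = l := by
  have hlt := idxOf_lt_length_of_mem ha
  have h := insertIdx_eraseIdx_getElem hlt
  rwa [getElem_idxOf hlt, ← erase_eq_eraseIdx_of_idxOf rfl] at h

theorem count_insertIdx (hp : p ≤ l.length) : (l.insertIdx p a).count b = (a :: l).count b :=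
  (perm_insertIdx a l hp).count_eq b

end DecidableEq

end List

theorem Relation.ReflTransGen.exists_seq {α : Type*} {r : α → α → Prop} {a b : α}
    (h : ReflTransGen r a b) :
    ∃ m, ∃ f : ℕ → α, f 0 = a ∧ f m = b ∧ ∀ j < m, r (f j) (f (j + 1)) := by
  induction h using Relation.ReflTransGen.head_induction_on with
  | refl => exact ⟨0, fun _ => b, rfl, rfl, by simp⟩
  | @head c d hcd _ ih =>
    obtain ⟨m, f, hf0, hfm, hf⟩ := ih
    refine ⟨m + 1, fun j => j.casesOn c f, rfl, hfm, fun j hj => ?_⟩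
    cases j with
    | zero => exact show r c (f 0) from hf0 ▸ hcd
    | succ j => exact hf j (by omega)

section Occurrences

variable {l t : List ℕ} {a x p : ℕ}

theorem secondOcc_le_length_sub_one (l : List ℕ) (x : ℕ) : secondOcc l x ≤ l.length - 1 := by
  unfold secondOcc
  omega

theorem secondOcc_append_of_not_mem (hx : x ∉ t) : secondOcc (l ++ t) x = secondOcc l x := by
  have := idxOf_le_length (l := l.reverse) (a := x)
  unfold secondOcc
  rw [reverse_append, idxOf_append, if_neg (by simpa using hx), length_append]
  simp only [length_reverse] at this ⊢
  omega

theorem secondOcc_append_singleton_self : secondOcc (l ++ [x]) x = l.length := by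
  simp [secondOcc]

theorem firstOcc_insertIdx_of_ne (hx : x ≠ a) :
    firstOcc (l.insertIdx p a) x = shiftFrom p (firstOcc l x) :=
  idxOf_insertIdx_of_ne hx

theorem secondOcc_insertIdx_of_ne (hx : x ≠ a) (hxl : x ∈ l) (hp : p ≤ l.length) :
    secondOcc (l.insertIdx p a) x = shiftFrom p (secondOcc l x) := by
  have hlt : l.reverse.idxOf x < l.length := by
    simpa using idxOf_lt_length_of_mem (mem_reverse.2 hxl)
  unfold secondOcc shiftFrom
  rw [length_insertIdx_of_le_length hp, reverse_insertIdx hp, idxOf_insertIdx_of_ne hx, shiftFrom]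
  split_ifs <;> omega

end Occurrences

section Structure

variable {n : ℕ} {v : List ℕ}

theorem IsTreeRep.mem {i : ℕ} (hv : IsTreeRep n v) (h1 : 1 ≤ i) (h2 : i ≤ n) :
    i ∈ v :=
  count_pos_iff.1 (by rw [hv.2.2.1 i h1 h2]; omega)

theorem IsTreeRep.pos (hv : IsTreeRep n v) : 0 < n := by
  obtain ⟨hlen, -, -, hhead, -, -⟩ := hv
  rcases v with _ | ⟨c, v⟩
  · simp at hhead
  · simp at hlen
    omega

theorem IsTreeRep.eq_caterpillar_one (hv : IsTreeRep 1 v) : v = caterpillar 1 :=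
  eq_replicate_iff.2 ⟨hv.1, fun x hx => by have := hv.2.1 x hx; omega⟩

theorem IsTreeRep.strictMonoOn_secondOcc (hv : IsTreeRep n v) :
    StrictMonoOn (secondOcc v) (Set.Icc 1 n) :=
  strictMonoOn_of_lt_add_one Set.ordConnected_Icc fun a _ ha ha1 => by
    simpa using hv.2.2.2.2.2 (a + 1) (by simp at ha; omega) ha1.2

theorem IsTreeRep.exists_eq_append_singleton (hv : IsTreeRep n v) : ∃ D, v = D ++ [n] := by
  obtain ⟨D, x, rfl⟩ := (eq_nil_or_concat v).resolve_left fun h => by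
    simpa [h] using hv.2.2.2.1
  rw [concat_eq_append] at hv ⊢
  refine ⟨D, ?_⟩
  have hx := hv.2.1 x (by simp)
  have hsn := secondOcc_le_length_sub_one (D ++ [x]) n
  rcases hx.2.lt_or_eq with hxn | rfl
  · have := hv.strictMonoOn_secondOcc ⟨hx.1, hxn.le⟩ ⟨hv.pos, le_rfl⟩ hxn
    simp [secondOcc_append_singleton_self] at this hsn
    omega
  · rfl

theorem IsTreeRep.one_le_secondOcc_self (hv : IsTreeRep n v) : 1 ≤ secondOcc v n := by
  obtain ⟨D, rfl⟩ := hv.exists_eq_append_singleton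
  have hlen := hv.1
  have hpos := hv.pos
  simp only [secondOcc_append_singleton_self, length_append, length_singleton] at hlen ⊢
  omega

end Structure

def extendRep (n : ℕ) (u : List ℕ) (p : ℕ) : List ℕ := u.insertIdx p n ++ [n]

section ExtendRep

variable {n p x y : ℕ} {u : List ℕ}

theorem length_extendRep (hp : p ≤ u.length) : (extendRep n u p).length = u.length + 2 := by
  simp [extendRep, length_insertIdx_of_le_length hp]

theorem mem_extendRep (hp : p ≤ u.length) : x ∈ extendRep n u p ↔ x = n ∨ x ∈ u := by
  simp [extendRep, mem_insertIdx hp, or_comm]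

theorem count_extendRep (hp : p ≤ u.length) :
    (extendRep n u p).count x = u.count x + if x = n then 2 else 0 := by
  rw [extendRep, count_append, count_insertIdx hp, count_cons, count_singleton]
  split_ifs <;> simp_all

theorem getD_zero_extendRep (hp1 : 1 ≤ p) (hp : p ≤ u.length) :
    (extendRep n u p).getD 0 0 = u.getD 0 0 := by
  obtain ⟨c, u, rfl⟩ := exists_cons_of_length_pos (by omega : 0 < u.length)
  obtain ⟨p, rfl⟩ := Nat.exists_eq_add_of_le' hp1
  simp [extendRep]

theorem firstOcc_extendRep_self (hnu : n ∉ u) (hp : p ≤ u.length) :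
    firstOcc (extendRep n u p) n = p := by
  rw [extendRep, firstOcc, idxOf_append_of_mem ((mem_insertIdx hp).2 (.inl rfl)),
    idxOf_insertIdx_self hnu hp]

theorem secondOcc_extendRep_self (hp : p ≤ u.length) :
    secondOcc (extendRep n u p) n = u.length + 1 := by
  rw [extendRep, secondOcc_append_singleton_self, length_insertIdx_of_le_length hp]

theorem firstOcc_extendRep_of_ne (hx : x ≠ n) (hxu : x ∈ u) (hp : p ≤ u.length) :
    firstOcc (extendRep n u p) x = shiftFrom p (firstOcc u x) := by
  rw [extendRep, firstOcc, idxOf_append_of_mem ((mem_insertIdx hp).2 (.inr hxu)),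
    ← firstOcc, firstOcc_insertIdx_of_ne hx]

theorem secondOcc_extendRep_of_ne (hx : x ≠ n) (hxu : x ∈ u) (hp : p ≤ u.length) :
    secondOcc (extendRep n u p) x = shiftFrom p (secondOcc u x) := by
  rw [extendRep, secondOcc_append_of_not_mem (by simpa using hx),
    secondOcc_insertIdx_of_ne hx hxu hp]

theorem firstOcc_lt_secondOcc_extendRep_iff (hx : x ≠ n) (hy : y ≠ n) (hxu : x ∈ u) (hyu : y ∈ u)
    (hp : p ≤ u.length) :
    firstOcc (extendRep n u p) x < secondOcc (extendRep n u p) y ↔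
      firstOcc u x < secondOcc u y := by
  rw [firstOcc_extendRep_of_ne hx hxu hp, secondOcc_extendRep_of_ne hy hyu hp,
    (strictMono_shiftFrom p).lt_iff_lt]

theorem secondOcc_lt_secondOcc_extendRep_iff (hx : x ≠ n) (hy : y ≠ n) (hxu : x ∈ u)
    (hyu : y ∈ u) (hp : p ≤ u.length) :
    secondOcc (extendRep n u p) x < secondOcc (extendRep n u p) y ↔
      secondOcc u x < secondOcc u y := by
  rw [secondOcc_extendRep_of_ne hx hxu hp, secondOcc_extendRep_of_ne hy hyu hp,
    (strictMono_shiftFrom p).lt_iff_lt]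

end ExtendRep

theorem IsTreeRep.of_extendRep {n p : ℕ} {u : List ℕ} (hnu : n + 1 ∉ u) (hp1 : 1 ≤ p)
    (hp : p ≤ u.length) (hv : IsTreeRep (n + 1) (extendRep (n + 1) u p)) :
    IsTreeRep n u ∧ p ≤ secondOcc u n := by
  obtain ⟨hlen, hmem, hcount, hhead, hfirst, hsecond⟩ := hv
  have hne {x : ℕ} (hx : x ≤ n) : x ≠ n + 1 := by omega
  rw [length_extendRep hp] at hlen
  have hcount' : ∀ i, 1 ≤ i → i ≤ n → u.count i = 2 := fun i h1 h2 => by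
    simpa [count_extendRep hp, hne h2] using hcount i h1 (by omega)
  have hmem' {i : ℕ} (h1 : 1 ≤ i) (h2 : i ≤ n) : i ∈ u :=
    count_pos_iff.1 (by rw [hcount' i h1 h2]; omega)
  refine ⟨⟨by omega, fun x hx => ?_, hcount', by rwa [getD_zero_extendRep hp1 hp] at hhead,
    fun i h2 hi => ?_, fun i h2 hi => ?_⟩, ?_⟩
  · have := hmem x ((mem_extendRep hp).2 (.inr hx))
    have := ne_of_mem_of_not_mem hx hnu
    omega
  · exact (firstOcc_lt_secondOcc_extendRep_iff (hne hi) (hne (by omega)) (hmem' (by omega) hi)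
      (hmem' (by omega) (by omega)) hp).1 (hfirst i h2 (by omega))
  · exact (secondOcc_lt_secondOcc_extendRep_iff (hne (by omega)) (hne hi)
      (hmem' (by omega) (by omega)) (hmem' (by omega) hi) hp).1 (hsecond i h2 (by omega))
  · have := hfirst (n + 1) (by omega) le_rfl
    rwa [firstOcc_extendRep_self hnu hp, Nat.add_sub_cancel,
      secondOcc_extendRep_of_ne (hne le_rfl) (hmem' (by omega) le_rfl) hp,
      lt_shiftFrom_iff] at this

theorem isTreeRep_extendRep {n p : ℕ} {u : List ℕ} (hu : IsTreeRep n u) (hp1 : 1 ≤ p)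
    (hpn : p ≤ secondOcc u n) : IsTreeRep (n + 1) (extendRep (n + 1) u p) := by
  have ⟨hlen, hmem, hcount, hhead, hfirst, hsecond⟩ := hu
  have hne {x : ℕ} (hx : x ≤ n) : x ≠ n + 1 := by omega
  have hp : p ≤ u.length := hpn.trans ((secondOcc_le_length_sub_one u n).trans (Nat.sub_le _ _))
  have hnu : n + 1 ∉ u := fun h => by have := hmem _ h; omega
  have hnu' : n ∈ u := hu.mem (by omega) le_rfl
  refine ⟨by rw [length_extendRep hp]; omega, fun x hx => ?_, fun i h1 hi => ?_,
    by rwa [getD_zero_extendRep hp1 hp], fun i h2 hi => ?_, fun i h2 hi => ?_⟩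
  · rcases (mem_extendRep hp).1 hx with rfl | hx
    · omega
    · have := hmem x hx
      omega
  · rw [count_extendRep hp]
    rcases hi.lt_or_eq with hi | rfl
    · simp [hcount i h1 (by omega), hne (Nat.le_of_lt_succ hi)]
    · simp [count_eq_zero.2 hnu]
  · rcases hi.lt_or_eq with hi | rfl
    · exact (firstOcc_lt_secondOcc_extendRep_iff (hne (by omega)) (hne (by omega))
        (hu.mem (by omega) (by omega)) (hu.mem (by omega) (by omega)) hp).2
        (hfirst i h2 (by omega))
    · rwa [firstOcc_extendRep_self hnu hp, Nat.add_sub_cancel,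
        secondOcc_extendRep_of_ne (hne le_rfl) hnu' hp, lt_shiftFrom_iff]
  · rcases hi.lt_or_eq with hi | rfl
    · exact (secondOcc_lt_secondOcc_extendRep_iff (hne (by omega)) (hne (by omega))
        (hu.mem (by omega) (by omega)) (hu.mem (by omega) (by omega)) hp).2
        (hsecond i h2 (by omega))
    · rw [secondOcc_extendRep_self hp, Nat.add_sub_cancel,
        secondOcc_extendRep_of_ne (hne le_rfl) hnu' hp]
      have := shiftFrom_le p (secondOcc u n)
      have := secondOcc_le_length_sub_one u n
      omega

theorem IsTreeRep.exists_eq_extendRep {n : ℕ} {v : List ℕ} (hn : 1 ≤ n)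
    (hv : IsTreeRep (n + 1) v) :
    ∃ u p, IsTreeRep n u ∧ 1 ≤ p ∧ p ≤ secondOcc u n ∧ v = extendRep (n + 1) u p := by
  have hcount := hv.2.2.1 (n + 1) (by omega) le_rfl
  obtain ⟨w, rfl⟩ := hv.exists_eq_append_singleton
  have hw : n + 1 ∈ w := count_pos_iff.1 (by simp [count_append] at hcount; omega)
  set u := w.erase (n + 1)
  set p := w.idxOf (n + 1)
  have hp : p ≤ u.length := by
    have := idxOf_lt_length_of_mem hw
    have : u.length + 1 = w.length := length_erase_add_one hw
    omega
  have hvu : w ++ [n + 1] = extendRep (n + 1) u p := by rw [extendRep, insertIdx_idxOf_erase hw]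
  rw [hvu] at hv hcount ⊢
  have hnu : n + 1 ∉ u := count_eq_zero.1 (by simpa [count_extendRep hp] using hcount)
  have hp1 : 1 ≤ p := by
    by_contra h
    have := hv.2.2.2.1
    rw [extendRep, show p = 0 by omega] at this
    simp at this
    omega
  obtain ⟨hu, hpn⟩ := hv.of_extendRep hnu hp1 hp
  exact ⟨u, p, hu, hp1, hpn, rfl⟩

theorem isHop_extendRep {n p q : ℕ} {u : List ℕ} (hu : IsTreeRep n u) (hp : p ≤ secondOcc u n)
    (hq1 : 1 ≤ q) (hq : q ≤ secondOcc u n) :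
    IsHop (n + 1) (extendRep (n + 1) u p) (extendRep (n + 1) u q) := by
  have hnu : n + 1 ∉ u := fun h => by have := hu.2.1 _ h; omega
  have hs := secondOcc_le_length_sub_one u n
  have herase : (extendRep (n + 1) u p).erase (n + 1) = u ++ [n + 1] := by
    rw [extendRep, erase_append_left _ ((mem_insertIdx (by omega)).2 (.inl rfl)),
      erase_insertIdx_of_not_mem hnu (by omega)]
  refine ⟨n + 1, q, by have := hu.pos; omega, le_rfl, hq1, ?_, ?_⟩
  · rwa [herase, Nat.add_sub_cancel, secondOcc_append_of_not_mem (by simp)]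
  · rw [herase, insertIdx_append_of_le_length (by omega), extendRep]

def extendRepLast (n : ℕ) (w : List ℕ) : List ℕ := extendRep (n + 1) w (secondOcc w n)

theorem extendRepLast_append_singleton (n : ℕ) (D : List ℕ) :
    extendRepLast n (D ++ [n]) = D ++ [n + 1, n, n + 1] := by
  rw [extendRepLast, secondOcc_append_singleton_self, extendRep,
    insertIdx_append_of_le_length le_rfl, insertIdx_length_self]
  simp

theorem caterpillar_succ_succ (n : ℕ) :
    caterpillar (n + 2) = extendRepLast (n + 1) (caterpillar (n + 1)) := by
  have : caterpillar (n + 1) = (1 :: (range' 2 n).flatMap fun k => [k, k - 1]) ++ [n + 1] := by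
    simp [caterpillar]
  rw [this, extendRepLast_append_singleton]
  simp [caterpillar, range'_concat]
  omega

theorem isTreeRep_extendRepLast {n : ℕ} {w : List ℕ} (hw : IsTreeRep n w) :
    IsTreeRep (n + 1) (extendRepLast n w) :=
  isTreeRep_extendRep hw hw.one_le_secondOcc_self le_rfl

theorem isHop_extendRepLast {n : ℕ} {w w' : List ℕ} (hw : IsTreeRep n w) (h : IsHop n w w') :
    IsHop (n + 1) (extendRepLast n w) (extendRepLast n w') := by
  obtain ⟨i, k, hi2, hin, hk1, hk, rfl⟩ := h
  obtain ⟨D, rfl⟩ := hw.exists_eq_append_singleton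
  -- the first `i` precedes the second `i - 1`, so it is not the final `n`
  have hiD : i ∈ D := by
    by_contra hiD
    have h5 := hw.2.2.2.2.1 i hi2 hin
    have := secondOcc_le_length_sub_one (D ++ [n]) (i - 1)
    rw [firstOcc, idxOf_append_of_notMem hiD] at h5
    simp at this
    omega
  rw [erase_append_left _ hiD] at hk ⊢
  have hkD : k ≤ (D.erase i).length := by
    have := secondOcc_le_length_sub_one (D.erase i ++ [n]) (i - 1)
    simp at this
    omega
  rw [insertIdx_append_of_le_length hkD, extendRepLast_append_singleton,
    extendRepLast_append_singleton]
  refine ⟨i, k, hi2, by omega, hk1, ?_, ?_⟩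
  · rwa [erase_append_left _ hiD, secondOcc_append_of_not_mem (by simp; omega),
      ← secondOcc_append_of_not_mem (t := [n]) (by simp; omega)]
  · rw [erase_append_left _ hiD, insertIdx_append_of_le_length hkD]

def TreeRepHop (n : ℕ) (v w : List ℕ) : Prop := IsTreeRep n v ∧ IsHop n v w

theorem IsTreeRep.reflTransGen_caterpillar {n : ℕ} {v : List ℕ} (hv : IsTreeRep n v) :
    ReflTransGen (TreeRepHop n) v (caterpillar n) ∧
      ReflTransGen (TreeRepHop n) (caterpillar n) v := by
  induction n generalizing v with
  | zero => exact absurd hv.pos (lt_irrefl 0)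
  | succ n ih =>
    rcases Nat.eq_zero_or_pos n with rfl | hn
    · rw [hv.eq_caterpillar_one]
      exact ⟨.refl, .refl⟩
    obtain ⟨u, p, hu, hp1, hp, rfl⟩ := hv.exists_eq_extendRep hn
    have lift {a b : List ℕ} (h : ReflTransGen (TreeRepHop n) a b) :
        ReflTransGen (TreeRepHop (n + 1)) (extendRepLast n a) (extendRepLast n b) :=
      h.lift _ fun _ _ h => ⟨isTreeRep_extendRepLast h.1, isHop_extendRepLast h.1 h.2⟩
    have hs := hu.one_le_secondOcc_self
    have toLast : TreeRepHop (n + 1) (extendRep (n + 1) u p) (extendRepLast n u) :=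
      ⟨hv, isHop_extendRep hu hp hs le_rfl⟩
    have fromLast : TreeRepHop (n + 1) (extendRepLast n u) (extendRep (n + 1) u p) :=
      ⟨isTreeRep_extendRepLast hu, isHop_extendRep hu le_rfl hp1 hp⟩
    obtain ⟨toCat, fromCat⟩ := ih hu
    obtain ⟨n, rfl⟩ : ∃ m, n = m + 1 := ⟨n - 1, by omega⟩
    rw [caterpillar_succ_succ]
    exact ⟨.head toLast (lift toCat), (lift fromCat).tail fromLast⟩

theorem stmt7_general (n : ℕ) :
    (∀ v : List ℕ, IsTreeRep n v → ∃ m, HopChain n m v (caterpillar n)) ∧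
    (∀ u v : List ℕ, IsTreeRep n u → IsTreeRep n v → ∃ m, HopChain n m u v) := by
  have hopChain {u v : List ℕ} (h : ReflTransGen (TreeRepHop n) u v) : ∃ m, HopChain n m u v :=
    (ReflTransGen.mono (fun _ _ h => h.2) _ _ h).exists_seq
  exact ⟨fun v hv => hopChain hv.reflTransGen_caterpillar.1,
    fun u v hu hv => hopChain (hu.reflTransGen_caterpillar.1.trans hv.reflTransGen_caterpillar.2)⟩

/-- For `n ≥ 2`, every tree representation on `{1,…,n}` can be transformed by a
finite sequence of HOPs into the caterpillar representation; consequently, any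
tree representation can be transformed into any other by a finite sequence of
HOPs (the HOP graph on tree representations is connected). -/
theorem stmt7 (n : ℕ) (hn : 2 ≤ n) :
    (∀ v : List ℕ, IsTreeRep n v → ∃ m, HopChain n m v (caterpillar n)) ∧
    (∀ u v : List ℕ, IsTreeRep n u → IsTreeRep n v → ∃ m, HopChain n m u v) :=
  stmt7_general n
end

section
/- Let v be a tree representation on {1,…,n} and, for k ∈ {1,…,n}, let p_k denote the (1-indexed) position in v of the second occurrence of k. Then the total number of HOP moves available on v, namely Σ_{i=2}^{n} (p_{i−1} − 2) (for each i ∈ {2,…,n}, the first occurrence of i may be moved to any of the p_{i−1} − 2 positions strictly after position 1 and weakly before p_{i−1}, other than its current position), is at least (n−1)². -/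
/-!
Let `s_k` be the (0-indexed) position of the second `k`. The tree-representation axioms make
`s_1 < s_2 < ⋯ < s_n` and put the first `k + 1` before `s_k`, so the prefix of `v` ending at
position `s_k` contains both copies of `1, …, k` and one copy of `k + 1`: hence `s_k ≥ 2k`.
The `i`-th summand is therefore at least `2(i - 1) - 1`, and these odd numbers sum to `(n - 1)²`.
-/

lemma count_drop_secondOcc_succ (v : List ℕ) (x : ℕ) :
    (v.drop (secondOcc v x + 1)).count x = 0 := by
  rw [List.count_eq_zero]
  intro hx
  have hxv : x ∈ v := List.mem_of_mem_drop hx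
  have hlt : v.reverse.idxOf x < v.length := by
    simpa using List.idxOf_lt_length_iff.2 (List.mem_reverse.2 hxv)
  have hlen : v.length - (secondOcc v x + 1) = v.reverse.idxOf x := by
    unfold secondOcc; omega
  -- after reversal, `x` would occur before its first occurrence in `v.reverse`
  have hx' : x ∈ v.reverse.take (v.reverse.idxOf x) := by
    rw [← hlen, ← List.reverse_drop]
    exact List.mem_reverse.2 hx
  exact lt_irrefl _ ((List.mem_take_iff_idxOf_lt (List.mem_reverse.2 hxv)).1 hx')

lemma count_take_of_secondOcc_lt (v : List ℕ) (x : ℕ) {m : ℕ} (h : secondOcc v x < m) :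
    (v.take m).count x = v.count x := by
  have hdrop : (v.drop m).count x = 0 :=
    Nat.eq_zero_of_le_zero <| count_drop_secondOcc_succ v x ▸
      (List.drop_sublist_drop_left v h).count_le x
  conv_rhs => rw [← List.take_append_drop m v, List.count_append, hdrop, add_zero]

lemma sum_count_le_length (S : Finset ℕ) (l : List ℕ) : ∑ j ∈ S, l.count j ≤ l.length := by
  calc ∑ j ∈ S, l.count j ≤ ∑ j ∈ S ∪ l.toFinset, l.count j :=
        Finset.sum_le_sum_of_subset Finset.subset_union_left
    _ = l.length := by
        simpa using Multiset.sum_count_eq_card (s := S ∪ l.toFinset) (m := (l : Multiset ℕ))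
          (fun a ha => Finset.mem_union_right _ (by simpa using ha))

lemma sum_range_two_mul_add_one (m : ℕ) : ∑ i ∈ Finset.range m, (2 * i + 1) = m ^ 2 := by
  induction m with
  | zero => rfl
  | succ m ih => rw [Finset.sum_range_succ, ih]; ring

namespace IsTreeRep

variable {n : ℕ} {v : List ℕ}

lemma secondOcc_monotoneOn (hv : IsTreeRep n v) : MonotoneOn (secondOcc v) (Set.Icc 1 n) := by
  refine monotoneOn_of_le_succ Set.ordConnected_Icc fun i _ hi hi' => ?_
  simp only [Order.succ_eq_add_one, Set.mem_Icc] at hi hi' ⊢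
  obtain ⟨-, -, -, -, -, hsecond⟩ := hv
  simpa using (hsecond (i + 1) (by omega) hi'.2).le

lemma two_mul_le_secondOcc (hv : IsTreeRep n v) {k : ℕ} (hk : 1 ≤ k) (hkn : k < n) :
    2 * k ≤ secondOcc v k := by
  have hmono := hv.secondOcc_monotoneOn
  obtain ⟨-, -, hcount, -, hfirst, -⟩ := hv
  set pre := v.take (secondOcc v k + 1)
  have hfull : ∀ j ∈ Finset.Icc 1 k, pre.count j = 2 := by
    intro j hj
    rw [Finset.mem_Icc] at hj
    rw [count_take_of_secondOcc_lt v j (Nat.lt_succ_of_le <|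
      hmono ⟨hj.1, by omega⟩ ⟨hk, hkn.le⟩ hj.2), hcount j hj.1 (by omega)]
  have hnext : 1 ≤ pre.count (k + 1) := by
    have hmem : k + 1 ∈ v := List.count_pos_iff.1 (by rw [hcount (k + 1) (by omega) hkn]; omega)
    refine List.count_pos_iff.2 ((List.mem_take_iff_idxOf_lt hmem).2 ?_)
    simpa [firstOcc] using Nat.lt_succ_of_lt (hfirst (k + 1) (by omega) hkn)
  have hsum : ∑ j ∈ Finset.Icc 1 (k + 1), pre.count j = 2 * k + pre.count (k + 1) := by
    rw [Finset.sum_Icc_succ_top (by omega), Finset.sum_congr rfl hfull]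
    simp [mul_comm]
  have := sum_count_le_length (Finset.Icc 1 (k + 1)) pre
  have : pre.length ≤ secondOcc v k + 1 := List.length_take_le _ _
  omega

end IsTreeRep

/-- For a tree representation `v` on `{1,…,n}`, with `p_k = secondOcc v k + 1`
the 1-indexed position of the second occurrence of `k`, the total number of HOP
moves available on `v`, namely `Σ_{i=2}^{n} (p_{i−1} − 2)`, is at least `(n−1)²`. -/
theorem stmt9 (n : ℕ) (v : List ℕ) (hv : IsTreeRep n v) :
    (n - 1) ^ 2 ≤ ∑ i ∈ Finset.Icc 2 n, ((secondOcc v (i - 1) + 1) - 2) := by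
  calc (n - 1) ^ 2 = ∑ k ∈ Finset.range (n - 1), (2 * k + 1) :=
        (sum_range_two_mul_add_one _).symm
    _ ≤ ∑ k ∈ Finset.range (n - 1), (secondOcc v (k + 1) + 1 - 2) := by
        refine Finset.sum_le_sum fun k hk => ?_
        have := hv.two_mul_le_secondOcc (k := k + 1) (by omega) (by have := Finset.mem_range.1 hk; omega)
        omega
    _ = ∑ i ∈ Finset.Icc 2 n, ((secondOcc v (i - 1) + 1) - 2) := by
        rw [← Finset.Ico_add_one_right_eq_Icc, Finset.sum_Ico_eq_sum_range,
          show n + 1 - 2 = n - 1 by omega]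
        exact Finset.sum_congr rfl fun k _ => by rw [show 2 + k - 1 = k + 1 by omega]
end

section
/- Let n ≥ 2, let u, v be tree representations on {1,…,n}, and let u′ be obtained from u by a single HOP. Then Sim(u′,v) ≤ Sim(u,v) + 1. -/
/-- Start index (0-indexed) of the block `Bᵢ(v)`. -/
def blockStart (v : List ℕ) (i : ℕ) : ℕ := if i = 1 then 0 else secondOcc v (i - 1) + 1

/-- The block `Bᵢ(v)` of entries strictly between the second occurrences of
`i-1` and `i` (for `i = 1`, the block of entries before the second occurrence of `1`). -/
def block (v : List ℕ) (i : ℕ) : List ℕ := (v.take (secondOcc v i)).drop (blockStart v i)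

/-- Length of a longest common subsequence of `a` and `b`. -/
noncomputable def lcsLen (a b : List ℕ) : ℕ :=
  sSup {m | ∃ w : List ℕ, w.length = m ∧ w.Sublist a ∧ w.Sublist b}

/-- The HOP similarity of two tree representations on `{1,…,n}`:
`Sim(u,v) = Σ_{i=1}^{n-1} |LCS(Bᵢ(u), Bᵢ(v))|`. -/
noncomputable def sim (n : ℕ) (u v : List ℕ) : ℕ :=
  ∑ i ∈ Finset.Icc 1 (n - 1), lcsLen (block u i) (block v i)

/-!
A HOP deletes the first occurrence of `i`, which is not the second occurrence of any entry, and
reinserts `i` at position `k`. The deletion keeps every block `Bⱼ` up to a shift of positions,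
except that one block may lose an entry, so each block of `u.erase i` is a subsequence of the
corresponding block of `u`. The reinsertion adds one entry to the unique block whose range of
positions contains `k` and leaves the other blocks unchanged. A longest common subsequence can
only shrink when passing to a subsequence, and grows by at most one when a single entry is
inserted.
-/
open List Finset

section ListLemmas

variable {α : Type*}

theorem List.insertIdx_eq_take_append_cons_drop {l : List α} {k : ℕ} (hk : k ≤ l.length)
    (y : α) : l.insertIdx k y = l.take k ++ y :: l.drop k :=
  ext_getElem (by grind) (by grind)

theorem List.insertIdx_append_of_le_length_s11 {A B : List α} {k : ℕ} (hk : k ≤ A.length) (y : α) :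
    (A ++ B).insertIdx k y = A.insertIdx k y ++ B :=
  ext_getElem (by grind) (by grind)

theorem List.insertIdx_append_of_length_le {A B : List α} {k : ℕ} (hk : A.length ≤ k) (y : α) :
    (A ++ B).insertIdx k y = A ++ B.insertIdx (k - A.length) y :=
  ext_getElem (by grind) (by grind)

theorem List.drop_take_eraseIdx {l : List α} {p s t : ℕ} :
    ((l.eraseIdx p).take (if p < t then t - 1 else t)).drop (if p < s then s - 1 else s) =
      if s ≤ p ∧ p < t then ((l.take t).drop s).eraseIdx (p - s) else (l.take t).drop s := by
  split_ifs <;> exact ext_getElem (by grind) (by grind)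

theorem List.drop_take_insertIdx {l : List α} {k s t : ℕ} (hk : k ≤ l.length) (y : α) :
    ((l.insertIdx k y).take (if k ≤ t then t + 1 else t)).drop (if k < s then s + 1 else s) =
      if s ≤ k ∧ k ≤ t then ((l.take t).drop s).insertIdx (k - s) y else (l.take t).drop s := by
  split_ifs <;> exact ext_getElem (by grind) (by grind)

theorem List.exists_eq_append_cons_notMem {l : List α} {x : α} (hx : x ∈ l) :
    ∃ A B, l = A ++ x :: B ∧ x ∉ B := by
  obtain ⟨A, B, h, hA⟩ := eq_append_cons_of_mem (mem_reverse.2 hx)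
  exact ⟨B.reverse, A.reverse, by simpa using congrArg reverse h, by simpa using hA⟩

end ListLemmas

section SecondOcc

variable {l : List ℕ} {x : ℕ}

theorem secondOcc_append_cons {A B : List ℕ} (hx : x ∉ B) :
    secondOcc (A ++ x :: B) x = A.length := by
  simp [secondOcc, idxOf_append_of_notMem, hx]

theorem getElem_secondOcc_s11 (hx : x ∈ l) : ∃ h : secondOcc l x < l.length, l[secondOcc l x] = x := by
  obtain ⟨A, B, rfl, hB⟩ := exists_eq_append_cons_notMem hx
  simp [secondOcc_append_cons hB]

theorem secondOcc_eraseIdx {p : ℕ} (hx : x ∈ l) (hp : p ≠ secondOcc l x) :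
    secondOcc (l.eraseIdx p) x =
      if p < secondOcc l x then secondOcc l x - 1 else secondOcc l x := by
  obtain ⟨A, B, rfl, hB⟩ := exists_eq_append_cons_notMem hx
  rw [secondOcc_append_cons hB] at hp ⊢
  rcases Nat.lt_or_gt_of_ne hp with hpA | hpA
  · rw [eraseIdx_append_of_lt_length hpA, secondOcc_append_cons hB, if_pos hpA,
      length_eraseIdx_of_lt hpA]
  · obtain ⟨q, rfl⟩ := Nat.exists_eq_add_of_lt hpA
    rw [eraseIdx_append_of_length_le (by omega), if_neg (by omega),
      show A.length + q + 1 - A.length = q + 1 by omega, eraseIdx_cons_succ,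
      secondOcc_append_cons fun h => hB ((eraseIdx_sublist B q).mem h)]

theorem secondOcc_insertIdx {y k : ℕ} (hx : x ∈ l) (hk : k ≤ l.length)
    (hy : y ≠ x ∨ k ≤ secondOcc l x) :
    secondOcc (l.insertIdx k y) x =
      if k ≤ secondOcc l x then secondOcc l x + 1 else secondOcc l x := by
  obtain ⟨A, B, rfl, hB⟩ := exists_eq_append_cons_notMem hx
  rw [secondOcc_append_cons hB] at hy ⊢
  split_ifs with hkA
  · rw [insertIdx_append_of_le_length_s11 hkA, secondOcc_append_cons hB,
      length_insertIdx_of_le_length hkA]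
  · obtain ⟨q, rfl⟩ := Nat.exists_eq_add_of_lt (not_le.1 hkA)
    rw [insertIdx_append_of_length_le (by omega),
      show A.length + q + 1 - A.length = q + 1 by omega, insertIdx_succ_cons,
      secondOcc_append_cons]
    exact fun h => (eq_or_mem_of_mem_insertIdx h).elim (hy.resolve_right hkA ·.symm) hB

end SecondOcc

section LCS

theorem le_lcsLen {w a b : List ℕ} (ha : w <+ a) (hb : w <+ b) : w.length ≤ lcsLen a b :=
  le_csSup ⟨a.length, by rintro _ ⟨w, rfl, ha, -⟩; exact ha.length_le⟩ ⟨w, rfl, ha, hb⟩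

theorem lcsLen_le {a b : List ℕ} {c : ℕ} (h : ∀ w : List ℕ, w <+ a → w <+ b → w.length ≤ c) :
    lcsLen a b ≤ c :=
  csSup_le ⟨0, [], rfl, nil_sublist _, nil_sublist _⟩ <| by
    rintro _ ⟨w, rfl, ha, hb⟩
    exact h w ha hb

theorem lcsLen_mono_left {a a' b : List ℕ} (h : a' <+ a) : lcsLen a' b ≤ lcsLen a b :=
  lcsLen_le fun _ hw hb => le_lcsLen (hw.trans h) hb

theorem lcsLen_append_cons_le (A B b : List ℕ) (x : ℕ) :
    lcsLen (A ++ x :: B) b ≤ lcsLen (A ++ B) b + 1 := by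
  refine lcsLen_le fun w hw hb => ?_
  obtain ⟨w₁, w₂, rfl, h₁, h₂⟩ := sublist_append_iff.1 hw
  have := le_lcsLen (h₁.append h₂.tail) (((tail_sublist w₂).append_left w₁).trans hb)
  simp only [length_append, length_tail, tail_cons] at this ⊢
  omega

theorem lcsLen_insertIdx_le (a b : List ℕ) (k x : ℕ) :
    lcsLen (a.insertIdx k x) b ≤ lcsLen a b + 1 := by
  rcases le_or_gt k a.length with hk | hk
  · simpa [← insertIdx_eq_take_append_cons_drop hk] using
      lcsLen_append_cons_le (a.take k) (a.drop k) b x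
  · rw [insertIdx_of_length_lt hk]
    exact Nat.le_succ _

end LCS

theorem Finset.card_filter_le_one_of_lt {s : Finset ℕ} {a b : ℕ → ℕ}
    (h : ∀ j ∈ s, ∀ j' ∈ s, j < j' → b j < a j') (k : ℕ) :
    #{j ∈ s | a j ≤ k ∧ k ≤ b j} ≤ 1 := by
  refine card_le_one.2 fun j hj j' hj' => ?_
  simp only [mem_filter] at hj hj'
  by_contra hne
  rcases Nat.lt_or_gt_of_ne hne with hlt | hlt
  · have := h j hj.1 j' hj'.1 hlt
    omega
  · have := h j' hj'.1 j hj.1 hlt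
    omega

namespace IsTreeRep

variable {n i j k : ℕ} {u : List ℕ}

theorem mem_erase (hu : IsTreeRep n u) (h1 : 1 ≤ j) (hj : j ≤ n) (x : ℕ) : j ∈ u.erase x := by
  obtain ⟨-, -, hcount, -⟩ := hu
  rw [← count_pos_iff, count_erase, hcount j h1 hj]
  split_ifs <;> omega

theorem secondOcc_mono (hu : IsTreeRep n u) {a b : ℕ} (ha : 1 ≤ a) (hab : a ≤ b) (hb : b ≤ n) :
    secondOcc u a ≤ secondOcc u b := by
  induction b, hab using Nat.le_induction with
  | base => exact le_rfl
  | succ b hab ih =>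
    obtain ⟨-, -, -, -, -, hsecond⟩ := hu
    exact (ih (by omega)).trans (hsecond (b + 1) (by omega) hb).le

theorem idxOf_ne_secondOcc (hu : IsTreeRep n u) (hi : 2 ≤ i) (hin : i ≤ n) (h1 : 1 ≤ j)
    (hj : j ≤ n) : u.idxOf i ≠ secondOcc u j := by
  intro h
  obtain ⟨_, hget⟩ := getElem_secondOcc_s11 (mem_of_mem_erase (hu.mem_erase h1 hj i))
  obtain rfl : j = i := by simpa only [← h, getElem_idxOf] using hget.symm
  obtain ⟨-, -, -, -, hfirst, hsecond⟩ := hu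
  exact ((hfirst j hi hin).trans (hsecond j hi hin)).ne h

theorem secondOcc_erase (hu : IsTreeRep n u) (hi : 2 ≤ i) (hin : i ≤ n) (h1 : 1 ≤ j)
    (hj : j ≤ n) :
    secondOcc (u.erase i) j =
      if u.idxOf i < secondOcc u j then secondOcc u j - 1 else secondOcc u j := by
  rw [← eraseIdx_idxOf_eq_erase]
  exact secondOcc_eraseIdx (mem_of_mem_erase (hu.mem_erase h1 hj i))
    (hu.idxOf_ne_secondOcc hi hin h1 hj)

theorem blockStart_erase (hu : IsTreeRep n u) (hi : 2 ≤ i) (hin : i ≤ n) (h1 : 1 ≤ j)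
    (hj : j ≤ n) :
    blockStart (u.erase i) j =
      if u.idxOf i < blockStart u j then blockStart u j - 1 else blockStart u j := by
  rcases eq_or_ne j 1 with rfl | hj1
  · simp [blockStart]
  have := hu.idxOf_ne_secondOcc hi hin (j := j - 1) (by omega) (by omega)
  rw [blockStart, blockStart, if_neg hj1, if_neg hj1,
    hu.secondOcc_erase hi hin (j := j - 1) (by omega) (by omega)]
  split_ifs <;> omega

theorem block_erase_sublist (hu : IsTreeRep n u) (hi : 2 ≤ i) (hin : i ≤ n) (h1 : 1 ≤ j)
    (hj : j ≤ n) : block (u.erase i) j <+ block u j := by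
  rw [block, hu.secondOcc_erase hi hin h1 hj, hu.blockStart_erase hi hin h1 hj,
    ← eraseIdx_idxOf_eq_erase, drop_take_eraseIdx]
  split_ifs
  exacts [eraseIdx_sublist _ _, Sublist.refl _]

theorem secondOcc_erase_mono (hu : IsTreeRep n u) (hi : 2 ≤ i) (hin : i ≤ n) {a b : ℕ}
    (ha : 1 ≤ a) (hab : a ≤ b) (hb : b ≤ n) :
    secondOcc (u.erase i) a ≤ secondOcc (u.erase i) b := by
  rw [hu.secondOcc_erase hi hin ha (by omega), hu.secondOcc_erase hi hin (by omega) hb]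
  have := hu.secondOcc_mono ha hab hb
  split_ifs <;> omega

theorem block_hop (hu : IsTreeRep n u) (hi : 2 ≤ i) (hin : i ≤ n)
    (hk : k ≤ secondOcc (u.erase i) (i - 1)) (h1 : 1 ≤ j) (hj : j ≤ n) :
    block ((u.erase i).insertIdx k i) j =
      if blockStart (u.erase i) j ≤ k ∧ k ≤ secondOcc (u.erase i) j then
        (block (u.erase i) j).insertIdx (k - blockStart (u.erase i) j) i
      else block (u.erase i) j := by
  set e := u.erase i
  have hke : k ≤ e.length :=
    hk.trans (getElem_secondOcc_s11 (hu.mem_erase (j := i - 1) (by omega) (by omega) i)).1.le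
  have hsecond : ∀ x, 1 ≤ x → x ≤ n →
      secondOcc (e.insertIdx k i) x =
        if k ≤ secondOcc e x then secondOcc e x + 1 else secondOcc e x := by
    intro x hx1 hxn
    refine secondOcc_insertIdx (hu.mem_erase hx1 hxn i) hke ?_
    by_cases hxi : i = x
    · subst hxi
      exact Or.inr (hk.trans (hu.secondOcc_erase_mono hi hin (by omega) (by omega) hxn))
    · exact Or.inl hxi
  have hstart : blockStart (e.insertIdx k i) j =
      if k < blockStart e j then blockStart e j + 1 else blockStart e j := by
    rcases eq_or_ne j 1 with rfl | hj1
    · simp [blockStart]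
    rw [blockStart, blockStart, if_neg hj1, if_neg hj1, hsecond (j - 1) (by omega) (by omega)]
    split_ifs <;> omega
  rw [block, block, hsecond j h1 hj, hstart, drop_take_insertIdx hke]

theorem lcsLen_block_hop_le (hu : IsTreeRep n u) (hi : 2 ≤ i) (hin : i ≤ n)
    (hk : k ≤ secondOcc (u.erase i) (i - 1)) (h1 : 1 ≤ j) (hj : j ≤ n) (w : List ℕ) :
    lcsLen (block ((u.erase i).insertIdx k i) j) w ≤ lcsLen (block u j) w +
      if blockStart (u.erase i) j ≤ k ∧ k ≤ secondOcc (u.erase i) j then 1 else 0 := by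
  have hsub := lcsLen_mono_left (b := w) (hu.block_erase_sublist hi hin h1 hj)
  rw [hu.block_hop hi hin hk h1 hj]
  split_ifs
  · exact (lcsLen_insertIdx_le _ _ _ _).trans (by omega)
  · exact hsub

end IsTreeRep

theorem stmt11_general (n : ℕ) (u v u' : List ℕ)
    (hu : IsTreeRep n u) (h : IsHop n u u') :
    sim n u' v ≤ sim n u v + 1 := by
  obtain ⟨i, k, hi, hin, -, hk, rfl⟩ := h
  set e := u.erase i
  have hdisjoint : ∀ j ∈ Icc 1 (n - 1), ∀ j' ∈ Icc 1 (n - 1), j < j' →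
      secondOcc e j < blockStart e j' := by
    intro j hj j' hj' hjj'
    simp only [mem_Icc] at hj hj'
    rw [blockStart, if_neg (by omega)]
    have : secondOcc e j ≤ secondOcc e (j' - 1) :=
      hu.secondOcc_erase_mono hi hin hj.1 (by omega) (by omega)
    omega
  calc sim n (e.insertIdx k i) v
      ≤ ∑ j ∈ Icc 1 (n - 1), (lcsLen (block u j) (block v j) +
          if blockStart e j ≤ k ∧ k ≤ secondOcc e j then 1 else 0) :=
        Finset.sum_le_sum fun j hj => hu.lcsLen_block_hop_le hi hin hk (mem_Icc.1 hj).1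
          ((mem_Icc.1 hj).2.trans (Nat.sub_le n 1)) _
    _ = sim n u v + #{j ∈ Icc 1 (n - 1) | blockStart e j ≤ k ∧ k ≤ secondOcc e j} := by
        rw [sum_add_distrib, sum_boole, Nat.cast_id]
        rfl
    _ ≤ sim n u v + 1 := by
        gcongr
        exact card_filter_le_one_of_lt hdisjoint k

/-- For `n ≥ 2`, tree representations `u, v` on `{1,…,n}`, and `u'` obtained
from `u` by a single HOP, `Sim(u',v) ≤ Sim(u,v) + 1`. -/
theorem stmt11 (n : ℕ) (hn : 2 ≤ n) (u v u' : List ℕ)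
    (hu : IsTreeRep n u) (hv : IsTreeRep n v) (h : IsHop n u u') :
    sim n u' v ≤ sim n u v + 1 :=
  stmt11_general n u v u' hu h
end
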